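/- Let α > 0, let F₀, F₁ : [0,1]^3 → [0,1]^3, and let x ∈ [0,1]^3 be a point such that F₀(x)_i − x_i < −α/5 and F₁(x)_i − x_i < −α/5 for every coordinate i ∈ {1,2,3}. Then for every t ∈ [0,1] and every coordinate i, the family F_t defined by the truncated homotopy formula satisfies F_t(x)_i − x_i < −α/5; in particular ‖F_t(x) − x‖_∞ > α/5, so x is not an (α/5)-approximate fixpoint of F_t for any t. -/

import Mathlib

/-- Truncation to [0,1]: T(a) = min(1, max(0, a)). -/
noncomputable def trunc01 (a : ℝ) : ℝ := min 1 (max 0 a)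

/-- The truncated homotopy formula: for t ∈ [0,1],
F_t(x)_i = max( min(F₀(x)_i, F₁(x)_i), T( T(F₀(x)_i − t) + T(F₁(x)_i − (1 − t)) ) ). -/
noncomputable def truncHomotopy (F0 F1 : (Fin 3 → ℝ) → Fin 3 → ℝ) (t : ℝ)
    (x : Fin 3 → ℝ) : Fin 3 → ℝ :=
  fun i => max (min (F0 x i) (F1 x i))
    (trunc01 (trunc01 (F0 x i - t) + trunc01 (F1 x i - (1 - t))))

/- If both inner truncations are active the sum is `a + b - 1`, which is at most `max a b`
unless `min a b > 1`, and then the outer truncation caps it at `1 < max a b`. -/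
lemma trunc01_add_trunc01_le_max {a b t : ℝ} (hab : 0 ≤ max a b) (ht0 : 0 ≤ t) (ht1 : t ≤ 1) :
    trunc01 (trunc01 (a - t) + trunc01 (b - (1 - t))) ≤ max a b := by
  simp only [trunc01]
  grind

lemma truncHomotopy_apply_le_max {F0 F1 : (Fin 3 → ℝ) → Fin 3 → ℝ} {t : ℝ} {x : Fin 3 → ℝ}
    {i : Fin 3} (hx : 0 ≤ max (F0 x i) (F1 x i)) (ht : t ∈ Set.Icc (0 : ℝ) 1) :
    truncHomotopy F0 F1 t x i ≤ max (F0 x i) (F1 x i) :=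
  max_le min_le_max (trunc01_add_trunc01_le_max hx ht.1 ht.2)

lemma lt_dist_of_apply_sub_lt_neg {ι : Type*} [Fintype ι] {x y : ι → ℝ} {r : ℝ} (i : ι)
    (h : y i - x i < -r) : r < dist y x :=
  calc r < |y i - x i| := lt_abs.mpr (Or.inr (by linarith))
    _ = dist (y i) (x i) := (Real.dist_eq _ _).symm
    _ ≤ dist y x := dist_le_pi_dist y x i

theorem truncHomotopy_no_approx_fixpoint (α : ℝ)
    (F0 F1 : (Fin 3 → ℝ) → Fin 3 → ℝ)
    (h0 : Set.MapsTo F0 (Set.Icc 0 1) (Set.Icc 0 1))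
    (x : Fin 3 → ℝ) (hx : x ∈ Set.Icc (0 : Fin 3 → ℝ) 1)
    (hF0 : ∀ i : Fin 3, F0 x i - x i < -(α / 5))
    (hF1 : ∀ i : Fin 3, F1 x i - x i < -(α / 5)) :
    ∀ t ∈ Set.Icc (0 : ℝ) 1,
      (∀ i : Fin 3, truncHomotopy F0 F1 t x i - x i < -(α / 5)) ∧
      α / 5 < dist (truncHomotopy F0 F1 t x) x := by
  intro t ht
  have hcoord : ∀ i, truncHomotopy F0 F1 t x i - x i < -(α / 5) := fun i => by
    have hmax : 0 ≤ max (F0 x i) (F1 x i) := ((h0 hx).1 i).trans (le_max_left _ _)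
    have hlt : max (F0 x i) (F1 x i) - x i < -(α / 5) := by
      rw [← max_sub_sub_right]
      exact max_lt (hF0 i) (hF1 i)
    linarith [truncHomotopy_apply_le_max hmax ht]
  exact ⟨hcoord, lt_dist_of_apply_sub_lt_neg 0 (hcoord 0)⟩
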